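/- Let G be a connected graph and let S ⊆ G × (0,1) have a stairwell structure ⟨S₁,…,S_k⟩. Then for each x ∈ G, the number of indices i ∈ {1,…,k} such that x ∈ π(Sᵢ) has the same parity as k. In particular, if k is odd, then π(S) = G. -/

import Mathlib

open Set Topology

/-- A subset of a space is *regular* if it is closed and has finitely many connected
components, each of which is non-degenerate. -/
def IsRegularSet {G : Type*} [TopologicalSpace G] (A : Set G) : Prop :=
  IsClosed A ∧ {C : Set G | ∃ x ∈ A, C = connectedComponentIn A x}.Finite ∧
    ∀ x ∈ A, (connectedComponentIn A x).Nontrivial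

/-- A point of a graph is *ordinary* (neither a branch point nor an endpoint) if it has an
open neighborhood homeomorphic to an open interval. -/
def IsOrdinaryPoint {G : Type*} [TopologicalSpace G] (x : G) : Prop :=
  ∃ U : Set G, IsOpen U ∧ x ∈ U ∧ Nonempty (U ≃ₜ Set.Ioo (0 : ℝ) 1)

/-- A topological space is a *graph* if it is a finite union of arcs which intersect
at most in endpoints. -/
def IsGraphSpace (G : Type*) [TopologicalSpace G] : Prop :=
  ∃ (n : ℕ) (f : Fin n → unitInterval → G),
    (∀ i, Continuous (f i) ∧ Function.Injective (f i)) ∧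
    (⋃ i, Set.range (f i)) = Set.univ ∧
    ∀ i j, i ≠ j →
      Set.range (f i) ∩ Set.range (f j) ⊆ ({f i 0, f i 1} : Set G) ∩ {f j 0, f j 1}

/-- A subset of a space is a *graph* if it is a finite union of arcs which intersect
at most in endpoints. -/
def IsGraphSet {E : Type*} [TopologicalSpace E] (G : Set E) : Prop :=
  ∃ (n : ℕ) (f : Fin n → unitInterval → E),
    (∀ i, Continuous (f i) ∧ Function.Injective (f i)) ∧
    G = ⋃ i, Set.range (f i) ∧
    ∀ i j, i ≠ j →
      Set.range (f i) ∩ Set.range (f j) ⊆ ({f i 0, f i 1} : Set E) ∩ {f j 0, f j 1}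

/-- `φ` restricted to `A` is a homeomorphism onto `B`. -/
def MapsHomeoOnto {F G : Type*} [TopologicalSpace F] [TopologicalSpace G]
    (φ : F → G) (A : Set F) (B : Set G) : Prop :=
  φ '' A = B ∧ Topology.IsEmbedding (A.restrict φ)

/-- A *simple fold* on `G`, with pieces `F1, F2, F3` of `F` and projection `φ : F → G`,
satisfying properties (F1)-(F5). -/
def IsSimpleFold {F G : Type*} [TopologicalSpace F] [TopologicalSpace G]
    (φ : F → G) (F1 F2 F3 : Set F) : Prop :=
  Continuous φ ∧ F1 ∪ F2 ∪ F3 = Set.univ ∧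
  -- (F1)
  ((φ '' F1).Nonempty ∧ (φ '' F2).Nonempty ∧ (φ '' F3).Nonempty) ∧
  (IsRegularSet (φ '' F1) ∧ IsRegularSet (φ '' F2) ∧ IsRegularSet (φ '' F3)) ∧
  -- (F2)
  (φ '' F1) ∪ (φ '' F3) = Set.univ ∧ (φ '' F2) = (φ '' F1) ∩ (φ '' F3) ∧
  -- (F3)
  closure ((φ '' F1) \ (φ '' F2)) ∩ closure ((φ '' F3) \ (φ '' F2)) = ∅ ∧
  -- (F4)
  (MapsHomeoOnto φ F1 (φ '' F1) ∧ MapsHomeoOnto φ F2 (φ '' F2) ∧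
    MapsHomeoOnto φ F3 (φ '' F3)) ∧
  -- (F5)
  frontier (φ '' F1) = φ '' (F1 ∩ F2) ∧ frontier (φ '' F3) = φ '' (F2 ∩ F3) ∧
  F1 ∩ F3 = ∅

/-- `S` separates `A` from `B` within `Y`: the complement `Y \ S` is the union of two
disjoint sets, relatively open in `Y \ S`, containing `A` and `B` respectively. -/
def SeparatesWithin {E : Type*} [TopologicalSpace E] (Y S A B : Set E) : Prop :=
  ∃ U V : Set E,
    U ∪ V = Y \ S ∧ U ∩ V = ∅ ∧ A ⊆ U ∧ B ⊆ V ∧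
    (∃ U', IsOpen U' ∧ U = (Y \ S) ∩ U') ∧ (∃ V', IsOpen V' ∧ V = (Y \ S) ∩ V')

/-- `A` has *consistent complement relative to* `B`: for each component `C` of the
complement of `A`, either `∂C ⊆ B` or `∂C ∩ B = ∅`. -/
def ConsistentComplement {G : Type*} [TopologicalSpace G] (A B : Set G) : Prop :=
  ∀ x ∉ A, frontier (connectedComponentIn Aᶜ x) ⊆ B ∨
    frontier (connectedComponentIn Aᶜ x) ∩ B = ∅

/-- The *`A` side of `B`*, `σ_B(A)`: the closure of the union of all components of
`G \ B` meeting `A`. -/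
def sideOf {G : Type*} [TopologicalSpace G] (B A : Set G) : Set G :=
  closure (⋃ x ∈ {x : G | x ∉ B ∧ (connectedComponentIn Bᶜ x ∩ A).Nonempty},
    connectedComponentIn Bᶜ x)

/-- A subset of `G × [0,1]` is *straight* if it is closed, the projection is injective on
it, and its projection is regular. -/
def IsStraight {G : Type*} [TopologicalSpace G] (S : Set (G × unitInterval)) : Prop :=
  IsClosed S ∧ Set.InjOn Prod.fst S ∧ IsRegularSet (Prod.fst '' S)

/-- The *end set* of a straight set. -/
def endSet {G : Type*} [TopologicalSpace G] (S : Set (G × unitInterval)) :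
    Set (G × unitInterval) :=
  S ∩ Prod.fst ⁻¹' (frontier (Prod.fst '' S))

/-- A *stairwell structure* of height `k` for `S ⊆ G × [0,1]`, given by the pieces
`Sp 1, …, Sp k` with end set decompositions `E(Sp i) = α i ∪ β i`. -/
def IsStairwell {G : Type*} [TopologicalSpace G]
    (Sp α β : ℕ → Set (G × unitInterval)) (k : ℕ) (S : Set (G × unitInterval)) : Prop :=
  1 ≤ k ∧
  -- (S1)
  (∀ i ∈ Set.Icc 1 k, (Sp i).Nonempty ∧ IsStraight (Sp i)) ∧
  S = ⋃ i ∈ Set.Icc 1 k, Sp i ∧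
  -- (S2)
  (∀ i ∈ Set.Icc 1 k, endSet (Sp i) = α i ∪ β i ∧ α i ∩ β i = ∅ ∧
    (α i).Finite ∧ (β i).Finite) ∧
  α 1 = ∅ ∧ β k = ∅ ∧ (∀ i, 1 ≤ i → i < k → β i = α (i + 1)) ∧
  -- (S3)
  (∀ i, 1 ≤ i → i < k → ∃ V : Set G, IsOpen V ∧ Prod.fst '' β i ⊆ V ∧
    Prod.fst '' Sp i ∩ V = Prod.fst '' Sp (i + 1) ∩ V) ∧
  -- (S4)
  (∀ i ∈ Set.Icc 1 k, ConsistentComplement (Prod.fst '' Sp i) (Prod.fst '' α i) ∧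
    ConsistentComplement (Prod.fst '' Sp i) (Prod.fst '' β i)) ∧
  -- (S5)
  (∀ i ∈ Set.Icc 2 k, ∀ p ∈ α i, IsOrdinaryPoint p.1) ∧
  (∀ i j, 2 ≤ i → i < j → j ≤ k → Prod.fst '' α i ∩ Prod.fst '' α j = ∅)

/-- A *broken stairwell structure* of height `k` with a pit at level `i0`. -/
def IsBrokenStairwell {G : Type*} [TopologicalSpace G]
    (Sp α β : ℕ → Set (G × unitInterval)) (γ P1 P2 : Set (G × unitInterval))
    (k i0 : ℕ) (S : Set (G × unitInterval)) : Prop :=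
  1 ≤ k ∧ 1 ≤ i0 ∧ i0 ≤ k ∧
  -- (S1')
  (∀ i ∈ Set.Icc 1 k, (Sp i).Nonempty ∧ IsStraight (Sp i)) ∧
  P1.Nonempty ∧ IsStraight P1 ∧ P2.Nonempty ∧ IsStraight P2 ∧
  S = (⋃ i ∈ Set.Icc 1 k, Sp i) ∪ P1 ∪ P2 ∧
  -- (S2')
  (∀ i ∈ Set.Icc 1 k, i ≠ i0 → endSet (Sp i) = α i ∪ β i) ∧
  endSet (Sp i0) = α i0 ∪ β i0 ∪ γ ∧
  (∀ i ∈ Set.Icc 1 k, α i ∩ β i = ∅ ∧ (α i).Finite ∧ (β i).Finite) ∧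
  γ.Finite ∧ α i0 ∩ γ = ∅ ∧ β i0 ∩ γ = ∅ ∧
  α 1 = ∅ ∧ β k = ∅ ∧ (∀ i, 1 ≤ i → i < k → β i = α (i + 1)) ∧
  endSet P2 = endSet P1 ∪ γ ∧ endSet P1 ∩ γ = ∅ ∧
  -- (S3')
  (∀ i, 1 ≤ i → i < k → ∃ V : Set G, IsOpen V ∧ Prod.fst '' β i ⊆ V ∧
    Prod.fst '' Sp i ∩ V = Prod.fst '' Sp (i + 1) ∩ V) ∧
  (∃ V : Set G, IsOpen V ∧ Prod.fst '' endSet P1 ⊆ V ∧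
    Prod.fst '' P1 ∩ V = Prod.fst '' P2 ∩ V) ∧
  (∃ W : Set G, IsOpen W ∧ Prod.fst '' γ ⊆ W ∧
    Prod.fst '' P2 ∩ W = Prod.fst '' Sp i0 ∩ W) ∧
  -- (S4')
  (∀ i ∈ Set.Icc 1 k, ConsistentComplement (Prod.fst '' Sp i) (Prod.fst '' α i) ∧
    ConsistentComplement (Prod.fst '' Sp i) (Prod.fst '' β i)) ∧
  ConsistentComplement (Prod.fst '' Sp i0) (Prod.fst '' γ) ∧
  ConsistentComplement (Prod.fst '' P2) (Prod.fst '' endSet P1) ∧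
  ConsistentComplement (Prod.fst '' P2) (Prod.fst '' γ) ∧
  -- (S5')
  (∀ i ∈ Set.Icc 2 k, ∀ p ∈ α i, IsOrdinaryPoint p.1) ∧
  (∀ p ∈ endSet P1, IsOrdinaryPoint p.1) ∧ (∀ p ∈ γ, IsOrdinaryPoint p.1) ∧
  (∀ i j, 2 ≤ i → i < j → j ≤ k → Prod.fst '' α i ∩ Prod.fst '' α j = ∅) ∧
  (∀ i ∈ Set.Icc 2 k, Prod.fst '' α i ∩ Prod.fst '' endSet P1 = ∅ ∧
    Prod.fst '' α i ∩ Prod.fst '' γ = ∅) ∧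
  Prod.fst '' endSet P1 ∩ Prod.fst '' γ = ∅ ∧
  -- (S6')
  Prod.fst '' α i0 ∩ Prod.fst '' (P1 ∪ P2) = ∅

/-- A compactum is *hereditarily indecomposable* if every non-degenerate subcontinuum is
indecomposable, i.e. is not the union of two proper subcontinua. -/
def HereditarilyIndecomposable (X : Type*) [TopologicalSpace X] : Prop :=
  ∀ K : Set X, IsCompact K → IsConnected K → K.Nontrivial →
    ¬ ∃ A B : Set X, IsCompact A ∧ IsConnected A ∧ IsCompact B ∧ IsConnected B ∧
      A ∪ B = K ∧ A ≠ K ∧ B ≠ K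

/-- A continuum is *arc-like* if for every `ε > 0` it admits an `ε`-map onto `[0,1]`. -/
def ArcLike (X : Type*) [MetricSpace X] : Prop :=
  ∀ ε > (0 : ℝ), ∃ f : X → unitInterval, Continuous f ∧ Function.Surjective f ∧
    ∀ y, Metric.diam (f ⁻¹' {y}) < ε

/-- A continuum has *span zero* if every subcontinuum `Z ⊆ X × X` with
`π₁(Z) ⊆ π₂(Z)` meets the diagonal. -/
def SpanZero (X : Type*) [TopologicalSpace X] : Prop :=
  ∀ Z : Set (X × X), IsCompact Z → IsConnected Z →
    Prod.fst '' Z ⊆ Prod.snd '' Z → ∃ x, (x, x) ∈ Z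


/-! For `x ∉ π(Sᵢ)` let `C` be the component of `G \ π(Sᵢ)` containing `x`. Its boundary is a
nonempty subset of `∂π(Sᵢ) = π(αᵢ) ∪ π(βᵢ)`, and by consistent complement it lies entirely in
`π(αᵢ)` or entirely in `π(βᵢ)`. In the second case `i < k`, and since `π(Sᵢ)` and `π(Sᵢ₊₁)`
agree near the ordinary points `π(βᵢ) = π(αᵢ₊₁)`, `C` reaches a boundary point `p` along one side
of `p`, which also lies in a component `D` of `G \ π(Sᵢ₊₁)`. Consistent complement puts `∂D` in
`π(αᵢ₊₁)`, and two connected open sets that meet and avoid each other's boundary coincide, so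
`C = D`. Thus the levels not above `x` are paired off as `i ↔ i + 1`, so there is an even number
of them. -/

theorem IsPreconnected.subset_of_disjoint_frontier {X : Type*} [TopologicalSpace X]
    {s u : Set X} (hs : IsPreconnected s) (hu : IsOpen u) (hsu : (s ∩ u).Nonempty)
    (hfr : Disjoint s (frontier u)) : s ⊆ u := by
  refine hs.subset_of_closure_inter_subset hu hsu fun z ⟨hzu, hzs⟩ => ?_
  by_contra hz
  exact hfr.notMem_of_mem_left hzs ⟨hzu, by rwa [hu.interior_eq]⟩

theorem frontier_connectedComponentIn_compl_subset {X : Type*} [TopologicalSpace X]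
    [LocallyConnectedSpace X] {T : Set X} (hT : IsClosed T) (x : X) :
    frontier (connectedComponentIn Tᶜ x) ⊆ frontier T := by
  intro z hz
  have hzT : z ∈ T := by
    by_contra hzT
    obtain ⟨w, hwz, hwx⟩ := mem_closure_iff_nhds.mp hz.1 _
      (hT.isOpen_compl.connectedComponentIn.mem_nhds (mem_connectedComponentIn hzT))
    rw [connectedComponentIn_eq hwx, ← connectedComponentIn_eq hwz] at hz
    exact hz.2 (hT.isOpen_compl.connectedComponentIn.interior_eq.symm ▸
      mem_connectedComponentIn hzT)
  refine ⟨subset_closure hzT, fun hzi => ?_⟩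
  obtain ⟨w, hwT, hwx⟩ := mem_closure_iff_nhds.mp hz.1 _ (isOpen_interior.mem_nhds hzi)
  exact connectedComponentIn_subset _ _ hwx (interior_subset hwT)

theorem frontier_connectedComponentIn_compl_nonempty {X : Type*} [TopologicalSpace X]
    [ConnectedSpace X] {T : Set X} (hT : T.Nonempty) {x : X} (hx : x ∉ T) :
    (frontier (connectedComponentIn Tᶜ x)).Nonempty := by
  refine nonempty_frontier_iff.mpr ⟨⟨x, mem_connectedComponentIn hx⟩, fun huniv => ?_⟩
  obtain ⟨t, ht⟩ := hT
  exact connectedComponentIn_subset _ _ (huniv ▸ mem_univ t : t ∈ connectedComponentIn Tᶜ x) ht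

def HasTwoSides {X : Type*} [TopologicalSpace X] (p : X) : Prop :=
  ∀ N ∈ 𝓝 p, ∃ W₁ W₂ : Set X, IsPreconnected W₁ ∧ IsPreconnected W₂ ∧
    p ∈ closure W₁ ∧ p ∈ closure W₂ ∧ W₁ ∪ W₂ ⊆ N \ {p} ∧ insert p (W₁ ∪ W₂) ∈ 𝓝 p

theorem Real.hasTwoSides (t : ℝ) : HasTwoSides t := by
  intro N hN
  obtain ⟨ε, hε, hball⟩ := Metric.mem_nhds_iff.mp hN
  rw [Real.ball_eq_Ioo] at hball
  refine ⟨Ioo (t - ε) t, Ioo t (t + ε), isPreconnected_Ioo, isPreconnected_Ioo, ?_, ?_, ?_, ?_⟩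
  · rw [closure_Ioo (by linarith)]; exact ⟨by linarith, le_rfl⟩
  · rw [closure_Ioo (by linarith)]; exact ⟨le_rfl, by linarith⟩
  · rintro z (⟨h₁, h₂⟩ | ⟨h₁, h₂⟩)
    · exact ⟨hball ⟨h₁, by linarith⟩, h₂.ne⟩
    · exact ⟨hball ⟨by linarith, h₂⟩, h₁.ne'⟩
  · refine Filter.mem_of_superset (Ioo_mem_nhds (by linarith : t - ε < t)
      (by linarith : t < t + ε)) ?_
    rintro z ⟨h₁, h₂⟩
    rcases lt_trichotomy z t with h | rfl | h
    · exact Or.inr (Or.inl ⟨h₁, h⟩)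
    · exact Or.inl rfl
    · exact Or.inr (Or.inr ⟨h, h₂⟩)

theorem OpenPartialHomeomorph.hasTwoSides {X Y : Type*} [TopologicalSpace X] [TopologicalSpace Y]
    (χ : OpenPartialHomeomorph X Y) {x : X} (hx : x ∈ χ.source) (h : HasTwoSides x) :
    HasTwoSides (χ x) := by
  intro N hN
  have hN' : χ.source ∩ χ ⁻¹' N ∈ 𝓝 x :=
    Filter.inter_mem (χ.open_source.mem_nhds hx) (χ.continuousAt hx hN)
  obtain ⟨W₁, W₂, hW₁, hW₂, hx₁, hx₂, hWN, hWx⟩ := h _ hN'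
  have hWs : W₁ ∪ W₂ ⊆ χ.source := fun z hz => (hWN hz).1.1
  refine ⟨χ '' W₁, χ '' W₂,
    hW₁.image _ (χ.continuousOn.mono fun z hz => hWs (Or.inl hz)),
    hW₂.image _ (χ.continuousOn.mono fun z hz => hWs (Or.inr hz)),
    mem_closure_image (χ.continuousAt hx) hx₁, mem_closure_image (χ.continuousAt hx) hx₂, ?_, ?_⟩
  · rw [← image_union]
    rintro _ ⟨z, hz, rfl⟩
    exact ⟨(hWN hz).1.2, fun hzx => (hWN hz).2 (χ.injOn (hWs hz) hx hzx)⟩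
  · simpa [image_insert_eq, image_union] using χ.image_mem_nhds hx hWx

theorem IsOrdinaryPoint.hasTwoSides {X : Type*} [TopologicalSpace X] {p : X}
    (hp : IsOrdinaryPoint p) : HasTwoSides p := by
  obtain ⟨U, hU, hpU, ⟨e⟩⟩ := hp
  have hψ : IsOpenEmbedding fun y => (e.symm y : X) :=
    hU.isOpenEmbedding_subtypeVal.comp e.symm.isOpenEmbedding
  have hι : IsOpenEmbedding (Subtype.val : Ioo (0 : ℝ) 1 → ℝ) :=
    isOpen_Ioo.isOpenEmbedding_subtypeVal
  have : Nonempty (Ioo (0 : ℝ) 1) := ⟨e ⟨p, hpU⟩⟩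
  -- the inverse chart `(0, 1) → U`, extended to an open partial homeomorphism `ℝ → X`
  let χ := (hι.toOpenPartialHomeomorph _).symm.trans (hψ.toOpenPartialHomeomorph _)
  have hχ : χ (e ⟨p, hpU⟩) = p := by
    simp [χ, hι.toOpenPartialHomeomorph_left_inv]
  rw [← hχ]
  exact χ.hasTwoSides (by simp only [χ, mfld_simps]) (Real.hasTwoSides _)

theorem HasTwoSides.exists_preconnected_subset {X : Type*} [TopologicalSpace X] [T1Space X]
    {p : X} (hp : HasTwoSides p) {C N : Set X} (hC : IsOpen C) (hpC : p ∈ frontier C)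
    (hfin : (frontier C).Finite) (hN : N ∈ 𝓝 p) :
    ∃ E : Set X, IsPreconnected E ∧ E.Nonempty ∧ E ⊆ C ∩ N ∧ p ∈ closure E := by
  have hN' : N \ (frontier C \ {p}) ∈ 𝓝 p :=
    Filter.inter_mem hN (((hfin.subset sdiff_subset).isClosed).compl_mem_nhds fun h => h.2 rfl)
  obtain ⟨W₁, W₂, hW₁, hW₂, hp₁, hp₂, hWN, hWp⟩ := hp _ hN'
  have side : ∀ W, W ⊆ W₁ ∪ W₂ → IsPreconnected W → p ∈ closure W → (W ∩ C).Nonempty →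
      ∃ E : Set X, IsPreconnected E ∧ E.Nonempty ∧ E ⊆ C ∩ N ∧ p ∈ closure E := by
    intro W hW hWc hpW hWC
    have hWfr : Disjoint W (frontier C) := disjoint_left.mpr fun z hz hzC =>
      (hWN (hW hz)).1.2 ⟨hzC, (hWN (hW hz)).2⟩
    exact ⟨W, hWc, hWC.mono inter_subset_left,
      subset_inter (hWc.subset_of_disjoint_frontier hC hWC hWfr) fun z hz => (hWN (hW hz)).1.1,
      hpW⟩
  obtain ⟨z, hzW, hzC⟩ := mem_closure_iff_nhds.mp hpC.1 _ hWp
  have hzp : z ≠ p := fun hzp => hpC.2 (hC.interior_eq.symm ▸ hzp ▸ hzC)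
  rcases (mem_insert_iff.mp hzW).resolve_left hzp with hz | hz
  · exact side W₁ subset_union_left hW₁ hp₁ ⟨z, hz, hzC⟩
  · exact side W₂ subset_union_right hW₂ hp₂ ⟨z, hz, hzC⟩

theorem connectedComponentIn_compl_eq_of_frontier_subset {X : Type*} [TopologicalSpace X]
    [T1Space X] [LocallyConnectedSpace X] {T T' P V : Set X} (hT : IsClosed T)
    (hT' : IsClosed T') (hP : P.Finite) (hPT' : P ⊆ T') (hP₂ : ∀ p ∈ P, HasTwoSides p)
    (hV : IsOpen V) (hPV : P ⊆ V) (hTV : T ∩ V = T' ∩ V) (hT'P : ConsistentComplement T' P)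
    {x : X} (hx : x ∉ T) (hne : (frontier (connectedComponentIn Tᶜ x)).Nonempty)
    (hCP : frontier (connectedComponentIn Tᶜ x) ⊆ P) :
    connectedComponentIn T'ᶜ x = connectedComponentIn Tᶜ x := by
  set C := connectedComponentIn Tᶜ x
  have hC : IsOpen C := hT.isOpen_compl.connectedComponentIn
  have hPT : P ⊆ T := fun q hq => (hTV.symm.subset ⟨hPT' hq, hPV hq⟩).1
  obtain ⟨p, hp⟩ := hne
  obtain ⟨E, hE, ⟨y, hy⟩, hEC, hpE⟩ := (hP₂ p (hCP hp)).exists_preconnected_subset hC hp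
    (hP.subset hCP) (hV.mem_nhds (hPV (hCP hp)))
  have hET' : E ⊆ T'ᶜ := fun z hz hzT' =>
    connectedComponentIn_subset _ _ (hEC hz).1 (hTV.symm.subset ⟨hzT', (hEC hz).2⟩).1
  set D := connectedComponentIn T'ᶜ y
  have hD : IsOpen D := hT'.isOpen_compl.connectedComponentIn
  have hED : E ⊆ D := hE.subset_connectedComponentIn hy hET'
  have hpD : p ∈ frontier D := by
    rw [hD.frontier_eq]
    exact ⟨closure_mono hED hpE, fun h => connectedComponentIn_subset _ _ h (hPT' (hCP hp))⟩
  have hDP : frontier D ⊆ P :=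
    (hT'P y (hET' hy)).resolve_right (nonempty_iff_ne_empty.mp ⟨p, hpD, hCP hp⟩)
  have hCD : C ⊆ D := isPreconnected_connectedComponentIn.subset_of_disjoint_frontier hD
    ⟨y, (hEC hy).1, hED hy⟩
    (disjoint_left.mpr fun z hzC hzD => connectedComponentIn_subset _ _ hzC (hPT (hDP hzD)))
  have hDC : D ⊆ C := isPreconnected_connectedComponentIn.subset_of_disjoint_frontier hC
    ⟨y, hED hy, (hEC hy).1⟩
    (disjoint_left.mpr fun z hzD hzC => connectedComponentIn_subset _ _ hzD (hPT' (hCP hzC)))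
  rw [← connectedComponentIn_eq (hCD (mem_connectedComponentIn hx))]
  exact hDC.antisymm hCD

def ExitsThrough {X : Type*} [TopologicalSpace X] (T B : Set X) (x : X) : Prop :=
  x ∉ T ∧ frontier (connectedComponentIn Tᶜ x) ⊆ B

theorem ExitsThrough.of_inter_eq {X : Type*} [TopologicalSpace X] [T1Space X]
    [LocallyConnectedSpace X] [ConnectedSpace X] {T T' P V : Set X} (hT : IsClosed T)
    (hT' : IsClosed T') (hTne : T.Nonempty) (hP : P.Finite) (hPT' : P ⊆ T')
    (hP₂ : ∀ p ∈ P, HasTwoSides p) (hV : IsOpen V) (hPV : P ⊆ V) (hTV : T ∩ V = T' ∩ V)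
    (hT'P : ConsistentComplement T' P) {x : X} (hx : ExitsThrough T P x) :
    ExitsThrough T' P x := by
  have hcc := connectedComponentIn_compl_eq_of_frontier_subset hT hT' hP hPT' hP₂ hV hPV hTV
    hT'P hx.1 (frontier_connectedComponentIn_compl_nonempty hTne hx.1) hx.2
  have hxC : x ∈ connectedComponentIn T'ᶜ x := hcc ▸ mem_connectedComponentIn hx.1
  exact ⟨connectedComponentIn_subset _ _ hxC, hcc ▸ hx.2⟩

theorem even_card_filter_or_of_shift {P Q : ℕ → Prop} [DecidablePred P] [DecidablePred Q]
    {k : ℕ} (hPQ : ∀ i, 1 ≤ i → i < k → (P i ↔ Q (i + 1))) (hQ : ¬ Q 1) (hP : ¬ P k)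
    (hPQ' : ∀ i, 1 ≤ i → i ≤ k → ¬ (P i ∧ Q i)) :
    Even ({i ∈ Finset.Icc 1 k | P i ∨ Q i} : Finset ℕ).card := by
  have hshift : ({i ∈ Finset.Icc 1 k | P i} : Finset ℕ).card =
      ({i ∈ Finset.Icc 1 k | Q i} : Finset ℕ).card := by
    refine Finset.card_nbij' (· + 1) (· - 1) ?_ ?_ ?_ ?_
    · intro i hi
      simp only [Finset.coe_filter, Finset.mem_Icc, mem_ofPred_eq] at hi ⊢
      have hik : i < k := lt_of_le_of_ne hi.1.2 fun h => hP (h ▸ hi.2)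
      exact ⟨⟨by omega, hik⟩, (hPQ i hi.1.1 hik).mp hi.2⟩
    · intro j hj
      simp only [Finset.coe_filter, Finset.mem_Icc, mem_ofPred_eq] at hj ⊢
      have hj1 : 1 < j := lt_of_le_of_ne hj.1.1 fun h => hQ (h ▸ hj.2)
      refine ⟨⟨by omega, by omega⟩, (hPQ (j - 1) (by omega) (by omega)).mpr ?_⟩
      rw [Nat.sub_add_cancel hj1.le]
      exact hj.2
    · exact fun i _ => Nat.add_sub_cancel i 1
    · exact fun j hj => Nat.sub_add_cancel (Finset.mem_Icc.mp (Finset.mem_filter.mp hj).1).1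
  rw [Finset.filter_or, Finset.card_union_of_disjoint, hshift]
  · exact ⟨_, rfl⟩
  · exact Finset.disjoint_filter.mpr fun i hi hPi hQi =>
      hPQ' i (Finset.mem_Icc.mp hi).1 (Finset.mem_Icc.mp hi).2 ⟨hPi, hQi⟩

theorem IsGraphSpace.locallyPathConnectedSpace {G : Type*} [TopologicalSpace G] [T2Space G]
    (hG : IsGraphSpace G) : LocallyPathConnectedSpace G := by
  obtain ⟨n, f, hf, hcover, -⟩ := hG
  have : LocallyPathConnectedSpace unitInterval := (convex_Icc (0 : ℝ) 1).locallyPathConnectedSpace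
  have hsurj : Function.Surjective fun x : Σ _ : Fin n, unitInterval => f x.1 x.2 := by
    intro y
    obtain ⟨i, t, rfl⟩ := mem_iUnion.mp (hcover ▸ mem_univ y)
    exact ⟨⟨i, t⟩, rfl⟩
  exact (Topology.IsQuotientMap.of_surjective_continuous hsurj
    (continuous_sigma fun i => (hf i).1)).locallyPathConnectedSpace

namespace IsStairwell

variable {G : Type*} [TopologicalSpace G] {Sp α β : ℕ → Set (G × unitInterval)} {k : ℕ}
  {S : Set (G × unitInterval)}

theorem isClosed_fst_image (h : IsStairwell Sp α β k S) {i : ℕ} (hi : i ∈ Icc 1 k) :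
    IsClosed (Prod.fst '' Sp i) :=
  (h.2.1 i hi).2.2.2.1

theorem frontier_fst_image (h : IsStairwell Sp α β k S) {i : ℕ} (hi : i ∈ Icc 1 k) :
    frontier (Prod.fst '' Sp i) = Prod.fst '' α i ∪ Prod.fst '' β i := by
  rw [← image_union, ← (h.2.2.2.1 i hi).1, endSet, image_inter_preimage,
    inter_eq_self_of_subset_right (h.isClosed_fst_image hi).frontier_subset]

theorem disjoint_fst_image (h : IsStairwell Sp α β k S) {i : ℕ} (hi : i ∈ Icc 1 k) :
    Disjoint (Prod.fst '' α i) (Prod.fst '' β i) := by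
  obtain ⟨-, -, -, -, hα₁, hβₖ, hβα, -, -, -, hα⟩ := h
  obtain ⟨hi₁, hik⟩ := hi
  rcases hik.lt_or_eq with hik | rfl
  · rcases hi₁.lt_or_eq with hi₁ | rfl
    · rw [disjoint_iff_inter_eq_empty, hβα i hi₁.le hik]
      exact hα i (i + 1) hi₁ (Nat.lt_succ_self i) hik
    · simp [hα₁]
  · simp [hβₖ]

theorem exitsThrough_alpha_or_beta [LocallyConnectedSpace G] (h : IsStairwell Sp α β k S) {i : ℕ}
    (hi : i ∈ Icc 1 k) {x : G} (hx : x ∉ Prod.fst '' Sp i) :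
    ExitsThrough (Prod.fst '' Sp i) (Prod.fst '' α i) x ∨
      ExitsThrough (Prod.fst '' Sp i) (Prod.fst '' β i) x := by
  have hfr := (frontier_connectedComponentIn_compl_subset (h.isClosed_fst_image hi) x).trans
    (h.frontier_fst_image hi).subset
  obtain ⟨-, -, -, -, -, -, -, -, hS4, -⟩ := h
  refine ((hS4 i hi).1 x hx).imp (⟨hx, ·⟩) fun hA => ⟨hx, fun z hz => ?_⟩
  exact (hfr hz).resolve_left fun hzA => hA.subset ⟨hz, hzA⟩

theorem frontier_connectedComponentIn_nonempty [ConnectedSpace G]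
    (h : IsStairwell Sp α β k S) {i : ℕ} (hi : i ∈ Icc 1 k) {x : G} (hx : x ∉ Prod.fst '' Sp i) :
    (frontier (connectedComponentIn (Prod.fst '' Sp i)ᶜ x)).Nonempty :=
  frontier_connectedComponentIn_compl_nonempty ((h.2.1 i hi).1.image _) hx

theorem exitsThrough_beta_iff [T1Space G] [LocallyConnectedSpace G] [ConnectedSpace G]
    (h : IsStairwell Sp α β k S) {i : ℕ} (hi : 1 ≤ i) (hik : i < k) {x : G} :
    ExitsThrough (Prod.fst '' Sp i) (Prod.fst '' β i) x ↔
      ExitsThrough (Prod.fst '' Sp (i + 1)) (Prod.fst '' α (i + 1)) x := by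
  have hi₀ : i ∈ Icc 1 k := ⟨hi, hik.le⟩
  have hi₁ : i + 1 ∈ Icc 1 k := ⟨by omega, hik⟩
  have hT₀ := h.isClosed_fst_image hi₀
  have hT₁ := h.isClosed_fst_image hi₁
  have hPT : Prod.fst '' β i ⊆ Prod.fst '' Sp i :=
    subset_union_right.trans ((h.frontier_fst_image hi₀).symm.subset.trans hT₀.frontier_subset)
  have hPT' : Prod.fst '' α (i + 1) ⊆ Prod.fst '' Sp (i + 1) :=
    subset_union_left.trans ((h.frontier_fst_image hi₁).symm.subset.trans hT₁.frontier_subset)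
  obtain ⟨-, hS1, -, hS2, -, -, hβα, hS3, hS4, hS5, -⟩ := h
  obtain ⟨V, hV, hPV, hTV⟩ := hS3 i hi hik
  have hS4i := (hS4 i hi₀).2
  rw [hβα i hi hik] at hPT hPV hS4i ⊢
  have hP : (Prod.fst '' α (i + 1)).Finite := (hS2 (i + 1) hi₁).2.2.1.image _
  have hP₂ : ∀ p ∈ Prod.fst '' α (i + 1), HasTwoSides p := by
    rintro _ ⟨q, hq, rfl⟩
    exact (hS5 (i + 1) ⟨by omega, hik⟩ q hq).hasTwoSides
  exact ⟨.of_inter_eq hT₀ hT₁ ((hS1 i hi₀).1.image _) hP hPT' hP₂ hV hPV hTV (hS4 (i + 1) hi₁).1,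
    .of_inter_eq hT₁ hT₀ ((hS1 (i + 1) hi₁).1.image _) hP hPT hP₂ hV hPV hTV.symm hS4i⟩

open Classical in
theorem even_card_not_mem [T1Space G] [LocallyConnectedSpace G] [ConnectedSpace G]
    (h : IsStairwell Sp α β k S) (x : G) :
    Even ({i ∈ Finset.Icc 1 k | x ∉ Prod.fst '' Sp i} : Finset ℕ).card := by
  have ⟨hk, _, _, _, hα₁, hβₖ, _⟩ := h
  have hk₁ : 1 ∈ Icc 1 k := ⟨le_rfl, hk⟩
  have hkk : k ∈ Icc 1 k := ⟨hk, le_rfl⟩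
  have hshift := even_card_filter_or_of_shift
    (P := fun i => ExitsThrough (Prod.fst '' Sp i) (Prod.fst '' β i) x)
    (Q := fun i => ExitsThrough (Prod.fst '' Sp i) (Prod.fst '' α i) x)
    (fun i hi hik => h.exitsThrough_beta_iff hi hik)
    (fun hx => (h.frontier_connectedComponentIn_nonempty hk₁ hx.1).ne_empty
      (subset_empty_iff.mp (by simpa [hα₁] using hx.2)))
    (fun hx => (h.frontier_connectedComponentIn_nonempty hkk hx.1).ne_empty
      (subset_empty_iff.mp (by simpa [hβₖ] using hx.2)))
    (fun i hi hik ⟨hβ, hα⟩ => by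
      obtain ⟨z, hz⟩ := h.frontier_connectedComponentIn_nonempty ⟨hi, hik⟩ hβ.1
      exact (h.disjoint_fst_image ⟨hi, hik⟩).notMem_of_mem_left (hα.2 hz) (hβ.2 hz))
  convert hshift using 2
  refine Finset.filter_congr fun i hi => ⟨fun hx => ?_, fun hx => hx.elim (·.1) (·.1)⟩
  exact (h.exitsThrough_alpha_or_beta (by simpa using hi) hx).symm

theorem ncard_mem_mod_two [T1Space G] [LocallyConnectedSpace G] [ConnectedSpace G]
    (h : IsStairwell Sp α β k S) (x : G) :
    {i : ℕ | i ∈ Icc 1 k ∧ x ∈ Prod.fst '' Sp i}.ncard % 2 = k % 2 := by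
  classical
  have hset : {i : ℕ | i ∈ Icc 1 k ∧ x ∈ Prod.fst '' Sp i} =
      ↑({i ∈ Finset.Icc 1 k | x ∈ Prod.fst '' Sp i} : Finset ℕ) := by
    ext; simp
  have hsplit := Finset.card_filter_add_card_filter_not (s := Finset.Icc 1 k)
    (p := fun i => x ∈ Prod.fst '' Sp i)
  rw [Nat.card_Icc, Nat.add_sub_cancel] at hsplit
  obtain ⟨m, hm⟩ := h.even_card_not_mem x
  rw [hset, ncard_coe_finset]
  omega

theorem fst_image_eq_univ [T1Space G] [LocallyConnectedSpace G] [ConnectedSpace G]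
    (h : IsStairwell Sp α β k S) (hk : Odd k) : Prod.fst '' S = univ := by
  refine eq_univ_of_forall fun x => ?_
  have hne : {i : ℕ | i ∈ Icc 1 k ∧ x ∈ Prod.fst '' Sp i}.ncard ≠ 0 := by
    have := h.ncard_mem_mod_two x
    rw [Nat.odd_iff] at hk
    omega
  obtain ⟨i, hi, q, hq, rfl⟩ := nonempty_of_ncard_ne_zero hne
  rw [h.2.2.1]
  exact ⟨q, mem_biUnion hi hq, rfl⟩

end IsStairwell

theorem stmt10_general (G : Type*) [TopologicalSpace G] [T2Space G]
    [ConnectedSpace G] (hG : IsGraphSpace G)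
    (S : Set (G × unitInterval)) (Sp α β : ℕ → Set (G × unitInterval)) (k : ℕ)
    (h : IsStairwell Sp α β k S) :
    (∀ x : G, {i : ℕ | i ∈ Set.Icc 1 k ∧ x ∈ Prod.fst '' Sp i}.ncard % 2 = k % 2) ∧
    (Odd k → Prod.fst '' S = Set.univ) := by
  have : LocallyPathConnectedSpace G := hG.locallyPathConnectedSpace
  exact ⟨h.ncard_mem_mod_two, h.fst_image_eq_univ⟩

/-- parity of the number of levels above each point; if k is odd, π(S) = G. -/
theorem stmt10 (G : Type*) [TopologicalSpace G] [CompactSpace G] [T2Space G]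
    [ConnectedSpace G] (hG : IsGraphSpace G)
    (S : Set (G × unitInterval)) (Sp α β : ℕ → Set (G × unitInterval)) (k : ℕ)
    (h : IsStairwell Sp α β k S) :
    (∀ x : G, {i : ℕ | i ∈ Set.Icc 1 k ∧ x ∈ Prod.fst '' Sp i}.ncard % 2 = k % 2) ∧
    (Odd k → Prod.fst '' S = Set.univ) :=
  stmt10_general G hG S Sp α β k h
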